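/- arXiv:1504.00210 — 3 statements merged into one kernel-verified Lean document; each statement's English description precedes it below -/
import Mathlib

section
/- Let Md be the midpoint of AD. Then (i) if Q ≠ D0 and P' ≠ A, the line through D0 and Q is parallel to the line through A and P'; and (ii) K(D3) = Md, i.e. the image of D3 under the homothety with center G and ratio -1/2 equals the midpoint of AD. -/
/-!
The complement map `K` is the homothety at the centroid `G` with ratio `-1/2`; it sends the vertex
`A` to the midpoint `D0` of `BC`. Hence `D0 Q = K(A) K(P')` is parallel to `A P'`. For (ii), in
vector form `K X = (A + B + C)/2 - X/2` and `D3 = B + C - D`, so `K D3 = (A + D)/2`.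
-/

open EuclideanGeometry Affine

local notation "Pt" => EuclideanSpace ℝ (Fin 2)

open AffineMap

theorem AffineMap.homothety_vsub_homothety {k V P : Type*} [CommRing k] [AddCommGroup V]
    [Module k V] [AddTorsor V P] (c : P) (r : k) (p q : P) :
    homothety c r p -ᵥ homothety c r q = r • (p -ᵥ q) := by
  rw [← linearMap_vsub, homothety_linear, LinearMap.smul_apply, LinearMap.id_apply]

theorem AffineMap.homothety_affineSpan_pair_parallel {k V P : Type*} [Field k] [AddCommGroup V]
    [Module k V] [AddTorsor V P] (c : P) {r : k} (hr : r ≠ 0) (p q : P) :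
    line[k, homothety c r p, homothety c r q] ∥ line[k, p, q] :=
  AffineSubspace.affineSpan_pair_parallel_iff_exists_unit_smul.2
    ⟨Units.mk0 r hr, (homothety_vsub_homothety c r q p).symm⟩

section Complement

variable (k : Type*) {V : Type*} [Field k] [CharZero k] [AddCommGroup V] [Module k V]

def complementMap (a b c : V) : V →ᵃ[k] V :=
  homothety ((1/3 : k) • (a + b + c)) (-1/2 : k)

variable {k}

theorem complementMap_apply (a b c x : V) :
    complementMap k a b c x = (1/2 : k) • (a + b + c) - (1/2 : k) • x := by
  simp only [complementMap, homothety_apply, vsub_eq_sub, vadd_eq_add]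
  module

theorem complementMap_apply_left (a b c : V) : complementMap k a b c a = midpoint k b c := by
  rw [complementMap_apply, midpoint_eq_smul_add, invOf_eq_inv]
  module

theorem complementMap_pointReflection_midpoint (a b c d : V) :
    complementMap k a b c (Equiv.pointReflection (midpoint k b c) d) = midpoint k a d := by
  rw [complementMap_apply, Equiv.pointReflection_apply, midpoint_eq_smul_add,
    midpoint_eq_smul_add, invOf_eq_inv, vsub_eq_sub, vadd_eq_add]
  module

end Complement

theorem stmt_1_general (A B C G D D0 D3 P' Q Md : Pt)
    (hG : G = (1/3 : ℝ) • (A + B + C))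
    (hD0 : D0 = midpoint ℝ B C)
(hD3 : D3 = Equiv.pointReflection D0 D)
    (hQ : Q = AffineMap.homothety G (-1/2 : ℝ) P')
    (hMd : Md = midpoint ℝ A D) :
    (Q ≠ D0 → P' ≠ A → line[ℝ, D0, Q] ∥ line[ℝ, A, P']) ∧
      AffineMap.homothety G (-1/2 : ℝ) D3 = Md := by
  subst hG hD0 hD3 hQ hMd
  refine ⟨fun _ _ => ?_, complementMap_pointReflection_midpoint A B C D⟩
  rw [← complementMap_apply_left (k := ℝ) A B C]
  exact homothety_affineSpan_pair_parallel _ (by norm_num) A P'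

theorem stmt_1 (A B C G P D E F D0 E0 F0 D3 E3 F3 P' Q Md : Pt)
(hABC : AffineIndependent ℝ ![A, B, C])
    (hG : G = (1/3 : ℝ) • (A + B + C))
    (hPa : ¬ Collinear ℝ {B, C, P})
    (hPb : ¬ Collinear ℝ {C, A, P})
    (hPc : ¬ Collinear ℝ {A, B, P})
    (hD : Collinear ℝ {B, C, D}) (hDcev : Collinear ℝ {A, P, D})
    (hE : Collinear ℝ {C, A, E}) (hEcev : Collinear ℝ {B, P, E})
    (hF : Collinear ℝ {A, B, F}) (hFcev : Collinear ℝ {C, P, F})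
    (hD0 : D0 = midpoint ℝ B C) (hE0 : E0 = midpoint ℝ C A) (hF0 : F0 = midpoint ℝ A B)
(hD3 : D3 = Equiv.pointReflection D0 D)
    (hE3 : E3 = Equiv.pointReflection E0 E)
    (hF3 : F3 = Equiv.pointReflection F0 F)
(hP'a : Collinear ℝ {A, D3, P'})
    (hP'b : Collinear ℝ {B, E3, P'})
    (hP'c : Collinear ℝ {C, F3, P'})
    (hQ : Q = AffineMap.homothety G (-1/2 : ℝ) P')
    (hMd : Md = midpoint ℝ A D) :
    (Q ≠ D0 → P' ≠ A → line[ℝ, D0, Q] ∥ line[ℝ, A, P']) ∧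
      AffineMap.homothety G (-1/2 : ℝ) D3 = Md :=
  stmt_1_general A B C G D D0 D3 P' Q Md hG hD0 hD3 hQ hMd
end

section
/- Let R be the midpoint of AP, A0 the midpoint of EF, Q' = K(P), and M = K(Q'). Then the points D0, R, A0 are collinear, and M is the midpoint of the segment D0R. -/
open EuclideanGeometry Affine

local notation "Pt" => EuclideanSpace ℝ (Fin 2)

/-!
Write P = A + x • (B - A) + y • (C - A). The cevian traces are then E = A + (y / (1 - x)) • (C - A)
and F = A + (x / (1 - y)) • (B - A), and a direct computation puts the midpoint of EF on the line
through the midpoints of BC and AP (the Newton–Gauss line of the complete quadrilateral formed by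
AB, AC, BE, CF). The second claim is linear: K ∘ K is the homothety about G of ratio 1/4, and
(D0 + R) / 2 = (A + B + C + P) / 4 = G + (P - G) / 4.
-/

open AffineMap Module

theorem Collinear.exists_lineMap_eq {k V P : Type*} [DivisionRing k] [AddCommGroup V] [Module k V]
    [AddTorsor V P] {p₁ p₂ p₃ : P} (h : Collinear k {p₁, p₂, p₃}) (h₁₂ : p₁ ≠ p₂) :
    ∃ r : k, lineMap p₁ p₂ r = p₃ :=
  mem_affineSpan_pair_iff_exists_lineMap_eq.mp
    (h.mem_affineSpan_of_mem_of_ne (by simp) (by simp) (by simp) h₁₂)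

section RealVectorSpace

variable {V : Type*} [AddCommGroup V] [Module ℝ V] {A B C P E : V} {x y : ℝ}

theorem AffineIndependent.linearIndependent_sub_pair (h : AffineIndependent ℝ ![A, B, C]) :
    LinearIndependent ℝ ![B - A, C - A] := by
  have h' := ((affineIndependent_iff_linearIndependent_vsub ℝ _ 0).mp h).comp
    (fun i : Fin 2 => ⟨i.succ, Fin.succ_ne_zero i⟩) fun i j hij => by simpa using hij
  have hvec : ((fun i : {i : Fin 3 // i ≠ 0} => ![A, B, C] i -ᵥ ![A, B, C] 0) ∘
      fun i : Fin 2 => ⟨i.succ, Fin.succ_ne_zero i⟩) = ![B - A, C - A] := by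
    ext i
    fin_cases i <;> rfl
  rwa [hvec] at h'

theorem exists_eq_add_smul_sub_add_smul_sub [FiniteDimensional ℝ V] (hV : finrank ℝ V = 2)
    (h : LinearIndependent ℝ ![B - A, C - A]) (P : V) :
    ∃ x y : ℝ, P = A + x • (B - A) + y • (C - A) := by
  have hspan := h.span_eq_top_of_card_eq_finrank' (by simp [hV])
  rw [Matrix.range_cons, Matrix.range_cons, Matrix.range_empty, Set.union_empty,
    Set.singleton_union] at hspan
  obtain ⟨x, y, hxy⟩ := Submodule.mem_span_pair.mp (hspan ▸ Submodule.mem_top : P - A ∈ _)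
  exact ⟨x, y, by rw [add_assoc, hxy, add_sub_cancel]⟩

theorem cevian_trace_eq (h : LinearIndependent ℝ ![B - A, C - A]) (hBP : B ≠ P)
    (hE : Collinear ℝ {C, A, E}) (hEcev : Collinear ℝ {B, P, E})
    (hP : P = A + x • (B - A) + y • (C - A)) :
    x ≠ 1 ∧ E = A + (y / (1 - x)) • (C - A) := by
  have hCA : C ≠ A := sub_ne_zero.mp (h.ne_zero 1)
  obtain ⟨t, rfl⟩ := hE.exists_lineMap_eq hCA
  obtain ⟨s, hs⟩ := hEcev.exists_lineMap_eq hBP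
  subst hP
  have hcoord : (1 - s + s * x) • (B - A) + (s * y - (1 - t)) • (C - A) = 0 := by
    rw [lineMap_apply_module, lineMap_apply_module] at hs
    linear_combination (norm := module) hs
  obtain ⟨hb, hc⟩ := LinearIndependent.pair_iff.mp h _ _ hcoord
  have hx : 1 - x ≠ 0 := fun hx => by simp [show x = 1 by linarith] at hb
  refine ⟨fun h1 => hx (by rw [h1, sub_self]), ?_⟩
  have ht : 1 - t = y / (1 - x) := by
    rw [eq_div_iff hx]
    linear_combination -(1 - x) * hc - y * hb
  rw [lineMap_apply_module, ← ht]
  module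

theorem midpoint_eq_lineMap_midpoint_midpoint (hx : x ≠ 1) (hy : y ≠ 1) :
    midpoint ℝ (A + (y / (1 - x)) • (C - A)) (A + (x / (1 - y)) • (B - A)) =
      lineMap (midpoint ℝ B C) (midpoint ℝ A (A + x • (B - A) + y • (C - A)))
        ((1 - x - y) / ((1 - x) * (1 - y))) := by
  have hx' : 1 - x ≠ 0 := sub_ne_zero.mpr hx.symm
  have hy' : 1 - y ≠ 0 := sub_ne_zero.mpr hy.symm
  simp only [midpoint_eq_smul_add, lineMap_apply_module]
  match_scalars <;> field_simp <;> ring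

theorem homothety_centroid_neg_half_twice (A B C P : V) :
    homothety ((1 / 3 : ℝ) • (A + B + C)) (-1 / 2 : ℝ)
        (homothety ((1 / 3 : ℝ) • (A + B + C)) (-1 / 2 : ℝ) P) =
      midpoint ℝ (midpoint ℝ B C) (midpoint ℝ A P) := by
  simp only [homothety_apply, vsub_eq_sub, vadd_eq_add, midpoint_eq_smul_add, invOf_eq_inv]
  module

end RealVectorSpace

theorem stmt_5_general (A B C G P E F D0 R A0 Q' M : Pt)
(hABC : AffineIndependent ℝ ![A, B, C])
    (hG : G = (1/3 : ℝ) • (A + B + C))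
    (hPa : ¬ Collinear ℝ {B, C, P})
    (hPc : ¬ Collinear ℝ {A, B, P})
    (hE : Collinear ℝ {C, A, E}) (hEcev : Collinear ℝ {B, P, E})
    (hF : Collinear ℝ {A, B, F}) (hFcev : Collinear ℝ {C, P, F})
    (hD0 : D0 = midpoint ℝ B C)
    (hR : R = midpoint ℝ A P) (hA0 : A0 = midpoint ℝ E F)
    (hQ' : Q' = AffineMap.homothety G (-1/2 : ℝ) P)
    (hM : M = AffineMap.homothety G (-1/2 : ℝ) Q') :
    Collinear ℝ {D0, R, A0} ∧ M = midpoint ℝ D0 R := by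
  subst hG hD0 hR hA0 hQ' hM
  refine ⟨?_, homothety_centroid_neg_half_twice A B C P⟩
  have hli := hABC.linearIndependent_sub_pair
  obtain ⟨x, y, hP⟩ := exists_eq_add_smul_sub_add_smul_sub finrank_euclideanSpace_fin hli P
  obtain ⟨hx, rfl⟩ := cevian_trace_eq hli (ne₂₃_of_not_collinear hPc) hE hEcev hP
  obtain ⟨hy, rfl⟩ := cevian_trace_eq (LinearIndependent.pair_symm_iff.mp hli)
    (ne₂₃_of_not_collinear hPa) (Set.insert_comm A B {F} ▸ hF) hFcev (hP.trans (add_right_comm ..))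
  subst hP
  rw [midpoint_eq_lineMap_midpoint_midpoint hx hy]
  exact collinear_triple_of_mem_affineSpan_pair (left_mem_affineSpan_pair ..)
    (right_mem_affineSpan_pair ..) (lineMap_mem_affineSpan_pair ..)

theorem stmt_5 (A B C G P D E F D0 E0 F0 R A0 Q' M : Pt)
(hABC : AffineIndependent ℝ ![A, B, C])
    (hG : G = (1/3 : ℝ) • (A + B + C))
    (hPa : ¬ Collinear ℝ {B, C, P})
    (hPb : ¬ Collinear ℝ {C, A, P})
    (hPc : ¬ Collinear ℝ {A, B, P})
    (hD : Collinear ℝ {B, C, D}) (hDcev : Collinear ℝ {A, P, D})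
    (hE : Collinear ℝ {C, A, E}) (hEcev : Collinear ℝ {B, P, E})
    (hF : Collinear ℝ {A, B, F}) (hFcev : Collinear ℝ {C, P, F})
    (hD0 : D0 = midpoint ℝ B C) (hE0 : E0 = midpoint ℝ C A) (hF0 : F0 = midpoint ℝ A B)
    (hR : R = midpoint ℝ A P) (hA0 : A0 = midpoint ℝ E F)
    (hQ' : Q' = AffineMap.homothety G (-1/2 : ℝ) P)
    (hM : M = AffineMap.homothety G (-1/2 : ℝ) Q') :
    Collinear ℝ {D0, R, A0} ∧ M = midpoint ℝ D0 R :=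
  stmt_5_general A B C G P E F D0 R A0 Q' M hABC hG hPa hPc hE hEcev hF hFcev hD0 hR hA0 hQ' hM
end

section
/- The affine map T taking triangle ABC to the cevian triangle DEF of P maps the complement of P back to P: T(K(P)) = P, where K(P) is the image of P under the homothety with center G and ratio -1/2. -/
/-!
Write `P = a • A + b • B + c • C` in barycentric coordinates (`a + b + c = 1`). Comparing
barycentric coordinates of the two descriptions of `D`, as a point of `BC` and of `AP`, gives
`(b + c) • D = b • B + c • C`, and cyclically for `E`, `F`. The complement of `P` has barycentric
coordinates `((b + c) / 2, (c + a) / 2, (a + b) / 2)`, and `T` preserves affine combinations, so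
`T (K P) = ½ ((b + c) • D + (c + a) • E + (a + b) • F)`
`        = ½ ((b • B + c • C) + (c • C + a • A) + (a • A + b • B)) = P`.
-/

open EuclideanGeometry Affine

local notation "Pt" => EuclideanSpace ℝ (Fin 2)

section

variable {k V W : Type*} [Field k] [AddCommGroup V] [Module k V] [AddCommGroup W] [Module k W]

theorem eq_zero_of_smul_add_smul_add_smul_eq_zero {A B C : V} (h : ¬ Collinear k {A, B, C})
    {a b c : k} (hw : a + b + c = 0) (hv : a • A + b • B + c • C = 0) :
    a = 0 ∧ b = 0 ∧ c = 0 := by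
  have := (affineIndependent_iff_not_collinear_set.mpr h).eq_zero_of_sum_eq_zero
    (s := Finset.univ) (w := ![a, b, c]) (by simpa [Fin.sum_univ_three] using hw)
    (by simpa [Fin.sum_univ_three, add_assoc] using hv)
  exact ⟨this 0 (by simp), this 1 (by simp), this 2 (by simp)⟩

theorem exists_eq_smul_add_smul_add_smul [FiniteDimensional k V] (hV : Module.finrank k V = 2)
    {A B C : V} (h : ¬ Collinear k {A, B, C}) (P : V) :
    ∃ a b c : k, a + b + c = 1 ∧ P = a • A + b • B + c • C := by
  have hi := affineIndependent_iff_not_collinear_set.mpr h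
  have hspan : affineSpan k (Set.range ![A, B, C]) = ⊤ := by
    rw [hi.affineSpan_eq_top_iff_card_eq_finrank_add_one, hV, Fintype.card_fin]
  obtain ⟨w, hw, hP⟩ := eq_affineCombination_of_mem_affineSpan_of_fintype
    (hspan ▸ AffineSubspace.mem_top k V P)
  rw [Finset.affineCombination_eq_linear_combination _ _ _ hw, Fin.sum_univ_three] at hP
  rw [Fin.sum_univ_three] at hw
  exact ⟨w 0, w 1, w 2, hw, by simpa using hP⟩

theorem exists_eq_lineMap_of_collinear {X Y Z : V} (h : Collinear k {X, Y, Z}) (hXY : X ≠ Y) :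
    ∃ t : k, Z = AffineMap.lineMap X Y t := by
  obtain ⟨t, ht⟩ := mem_affineSpan_pair_iff_exists_lineMap_eq.mp
    (h.mem_affineSpan_of_mem_of_ne (p₃ := Z) (by simp) (by simp) (by simp) hXY)
  exact ⟨t, ht.symm⟩

theorem smul_cevian_trace_eq {A B C P D : V} (h : ¬ Collinear k {A, B, C}) {a b c : k}
    (hw : a + b + c = 1) (hP : P = a • A + b • B + c • C) (hAP : A ≠ P)
    (hD : Collinear k {B, C, D}) (hDcev : Collinear k {A, P, D}) :
    (b + c) • D = b • B + c • C := by
  subst hP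
  obtain ⟨t, rfl⟩ := exists_eq_lineMap_of_collinear hD (ne₂₃_of_not_collinear h)
  obtain ⟨s, hs⟩ := exists_eq_lineMap_of_collinear hDcev hAP
  simp only [AffineMap.lineMap_apply_module] at hs ⊢
  obtain ⟨ha, hb, hc⟩ := eq_zero_of_smul_add_smul_add_smul_eq_zero h
    (a := 1 - s + s * a) (b := s * b - (1 - t)) (c := s * c - t)
    (by linear_combination s * hw) (by linear_combination (norm := module) -hs)
  have hsbc : s * (b + c) = 1 := by linear_combination -ha + s * hw
  linear_combination (norm := module)
    (b * hsbc - (b + c) * hb) • B + (c * hsbc - (b + c) * hc) • C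

theorem AffineMap.map_smul_add_smul_add_smul (f : V →ᵃ[k] W) {A B C : V} {a b c : k}
    (hw : a + b + c = 1) : f (a • A + b • B + c • C) = a • f A + b • f B + c • f C := by
  obtain rfl : a = 1 - b - c := by linear_combination hw
  have hv : (1 - b - c) • A + b • B + c • C = (b • (B - A) + c • (C - A)) +ᵥ A := by
    rw [vadd_eq_add]; module
  rw [hv, AffineMap.map_vadd, map_add, map_smul, map_smul, ← vsub_eq_sub, ← vsub_eq_sub,
    AffineMap.linearMap_vsub, AffineMap.linearMap_vsub, vadd_eq_add, vsub_eq_sub, vsub_eq_sub]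
  module

end

theorem stmt_12_general (A B C G P D E F : Pt) (T : Pt →ᵃ[ℝ] Pt)
(hABC : AffineIndependent ℝ ![A, B, C])
    (hG : G = (1/3 : ℝ) • (A + B + C))
    (hPa : ¬ Collinear ℝ {B, C, P})
    (hPb : ¬ Collinear ℝ {C, A, P})
    (hD : Collinear ℝ {B, C, D}) (hDcev : Collinear ℝ {A, P, D})
    (hE : Collinear ℝ {C, A, E}) (hEcev : Collinear ℝ {B, P, E})
    (hF : Collinear ℝ {A, B, F}) (hFcev : Collinear ℝ {C, P, F})
    (hTA : T A = D) (hTB : T B = E) (hTC : T C = F) :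
    T (AffineMap.homothety G (-1/2 : ℝ) P) = P := by
  have hABC' := affineIndependent_iff_not_collinear_set.mp hABC
  have hBCA : ¬ Collinear ℝ {B, C, A} := by rwa [Set.pair_comm, Set.insert_comm]
  have hCAB : ¬ Collinear ℝ {C, A, B} := by rwa [Set.insert_comm, Set.pair_comm]
  obtain ⟨a, b, c, hw, hP⟩ := exists_eq_smul_add_smul_add_smul finrank_euclideanSpace_fin hABC' P
  have hD' := smul_cevian_trace_eq hABC' hw hP (ne₂₃_of_not_collinear hPb) hD hDcev
  have hE' := smul_cevian_trace_eq hBCA (a := b) (b := c) (c := a) (by linear_combination hw)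
    (by rw [hP]; abel) (ne₁₃_of_not_collinear hPa) hE hEcev
  have hF' := smul_cevian_trace_eq hCAB (a := c) (b := a) (c := b) (by linear_combination hw)
    (by rw [hP]; abel) (ne₂₃_of_not_collinear hPa) hF hFcev
  have hK : AffineMap.homothety G (-1/2 : ℝ) P
      = ((b + c) / 2) • A + ((c + a) / 2) • B + ((a + b) / 2) • C := by
    rw [AffineMap.homothety_apply, hG, hP, vsub_eq_sub, vadd_eq_add]
    linear_combination (norm := module) (-1/2 : ℝ) • hw • (A + B + C)
  rw [hK, T.map_smul_add_smul_add_smul (by linear_combination hw), hTA, hTB, hTC, hP]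
  linear_combination (norm := module) (1/2 : ℝ) • (hD' + hE' + hF')

theorem stmt_12 (A B C G P D E F D0 E0 F0 : Pt) (T : Pt →ᵃ[ℝ] Pt)
(hABC : AffineIndependent ℝ ![A, B, C])
    (hG : G = (1/3 : ℝ) • (A + B + C))
    (hPa : ¬ Collinear ℝ {B, C, P})
    (hPb : ¬ Collinear ℝ {C, A, P})
    (hPc : ¬ Collinear ℝ {A, B, P})
    (hD : Collinear ℝ {B, C, D}) (hDcev : Collinear ℝ {A, P, D})
    (hE : Collinear ℝ {C, A, E}) (hEcev : Collinear ℝ {B, P, E})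
    (hF : Collinear ℝ {A, B, F}) (hFcev : Collinear ℝ {C, P, F})
    (hD0 : D0 = midpoint ℝ B C) (hE0 : E0 = midpoint ℝ C A) (hF0 : F0 = midpoint ℝ A B)
    (hTA : T A = D) (hTB : T B = E) (hTC : T C = F) :
    T (AffineMap.homothety G (-1/2 : ℝ) P) = P :=
  stmt_12_general A B C G P D E F T hABC hG hPa hPb hD hDcev hE hEcev hF hFcev hTA hTB hTC
end
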